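/- arXiv:2209.11170 — 3 statements merged into one kernel-verified Lean document; each statement's English description precedes it below -/
import Mathlib

section
/- Let S ∈ ℂ^{M×M} be Hermitian positive definite, Hₐ ∈ ℂ^{P×M}, W ∈ ℂ^{P×K}, and let β > 0 be a real scalar. Assume G := W* Hₐ S⁻¹ Hₐ* W ∈ ℂ^{K×K} is invertible. Define F₀ := β · S⁻¹ Hₐ* W G⁻¹ ∈ ℂ^{M×K}. Then for every F ∈ ℂ^{M×K} satisfying the constraint W* Hₐ F = β · I_K, one has Re Tr(F₀* S F₀) ≤ Re Tr(F* S F); i.e., F₀ is a global minimizer of Tr(F* S F) subject to W* Hₐ F = β I_K. -/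
open Matrix
open scoped ComplexOrder

/-!
Write `G = A S⁻¹ Aᴴ` and `X₀ = S⁻¹ Aᴴ G⁻¹ C`. Then `X₀ᴴ S X = Cᴴ G⁻¹ᴴ (A X)` depends on `X` only
through `A X`, so for every feasible `X` (i.e. `A X = C = A X₀`) the cross term `X₀ᴴ S (X - X₀)`
vanishes and `Xᴴ S X = X₀ᴴ S X₀ + (X - X₀)ᴴ S (X - X₀)`, the last summand being positive
semidefinite. The precoder `F₀` is `X₀` for `A = Wᴴ Hₐ` and `C = β I`.
-/

namespace Matrix

variable {m n p 𝕜 : Type*} [Fintype m] [Fintype p] [RCLike 𝕜]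

lemma trace_conjTranspose_mul_mul_le_of_orthogonal [Fintype n] {S : Matrix m m 𝕜}
    (hS : S.PosSemidef) {X₀ X : Matrix m n 𝕜} (h : X₀ᴴ * S * (X - X₀) = 0) :
    (X₀ᴴ * S * X₀).trace ≤ (Xᴴ * S * X).trace := by
  set D := X - X₀
  have h' : Dᴴ * S * X₀ = 0 := by
    simpa [conjTranspose_mul, hS.isHermitian.eq, Matrix.mul_assoc] using congrArg conjTranspose h
  have hsplit : Xᴴ * S * X = X₀ᴴ * S * X₀ + Dᴴ * S * D := by
    calc Xᴴ * S * X = (X₀ + D)ᴴ * S * (X₀ + D) := by rw [add_sub_cancel]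
      _ = X₀ᴴ * S * X₀ + X₀ᴴ * S * D + (Dᴴ * S * X₀ + Dᴴ * S * D) := by
          simp only [conjTranspose_add, Matrix.add_mul, Matrix.mul_add]; abel
      _ = X₀ᴴ * S * X₀ + Dᴴ * S * D := by rw [h, h', add_zero, zero_add]
  rw [hsplit, trace_add]
  exact le_add_of_nonneg_right (hS.conjTranspose_mul_mul_same D).trace_nonneg

variable [DecidableEq m] [DecidableEq p]

/-- The minimizer of `Tr(Xᴴ S X)` subject to `A X = C`, when `S` is positive definite and
`A S⁻¹ Aᴴ` is invertible. -/
noncomputable def weightedMinNormSolution (S : Matrix m m 𝕜) (A : Matrix p m 𝕜)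
    (C : Matrix p n 𝕜) : Matrix m n 𝕜 :=
  S⁻¹ * Aᴴ * (A * S⁻¹ * Aᴴ)⁻¹ * C

lemma mul_weightedMinNormSolution {S : Matrix m m 𝕜} {A : Matrix p m 𝕜} (C : Matrix p n 𝕜)
    (hG : IsUnit (A * S⁻¹ * Aᴴ).det) : A * weightedMinNormSolution S A C = C := by
  rw [weightedMinNormSolution, ← Matrix.mul_assoc, ← Matrix.mul_assoc, ← Matrix.mul_assoc,
    mul_nonsing_inv _ hG, Matrix.one_mul]

lemma weightedMinNormSolution_conjTranspose_mul {S : Matrix m m 𝕜} (hS : S.IsHermitian)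
    (hSdet : IsUnit S.det) (A : Matrix p m 𝕜) (C : Matrix p n 𝕜) (X : Matrix m n 𝕜) :
    (weightedMinNormSolution S A C)ᴴ * S * X = Cᴴ * (A * S⁻¹ * Aᴴ)⁻¹ᴴ * (A * X) := by
  simp only [weightedMinNormSolution, conjTranspose_mul, conjTranspose_conjTranspose, hS.inv.eq,
    Matrix.mul_assoc, nonsing_inv_mul_cancel_left _ _ hSdet]

theorem trace_weightedMinNormSolution_le [Fintype n] {S : Matrix m m 𝕜} (hS : S.PosDef)
    {A : Matrix p m 𝕜} {C : Matrix p n 𝕜} (hG : IsUnit (A * S⁻¹ * Aᴴ).det) {X : Matrix m n 𝕜}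
    (hX : A * X = C) :
    ((weightedMinNormSolution S A C)ᴴ * S * weightedMinNormSolution S A C).trace ≤
      (Xᴴ * S * X).trace := by
  refine trace_conjTranspose_mul_mul_le_of_orthogonal hS.posSemidef ?_
  rw [weightedMinNormSolution_conjTranspose_mul hS.isHermitian
    ((isUnit_iff_isUnit_det S).mp hS.isUnit), Matrix.mul_sub, hX,
    mul_weightedMinNormSolution C hG, sub_self, Matrix.mul_zero]

end Matrix

theorem optimal_analog_precoder_general {M P K : ℕ}
    (S : Matrix (Fin M) (Fin M) ℂ) (hS : S.PosDef)
    (Ha : Matrix (Fin P) (Fin M) ℂ) (W : Matrix (Fin P) (Fin K) ℂ)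
    (β : ℝ)
    (hG : IsUnit (Wᴴ * Ha * S⁻¹ * Haᴴ * W))
    (F₀ : Matrix (Fin M) (Fin K) ℂ)
    (hF₀ : F₀ = (β : ℂ) • (S⁻¹ * Haᴴ * W * (Wᴴ * Ha * S⁻¹ * Haᴴ * W)⁻¹)) :
    ∀ F : Matrix (Fin M) (Fin K) ℂ,
      Wᴴ * Ha * F = (β : ℂ) • (1 : Matrix (Fin K) (Fin K) ℂ) →
      (Matrix.trace (F₀ᴴ * S * F₀)).re ≤ (Matrix.trace (Fᴴ * S * F)).re := by
  intro F hF
  have hG' : Wᴴ * Ha * S⁻¹ * (Wᴴ * Ha)ᴴ = Wᴴ * Ha * S⁻¹ * Haᴴ * W := by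
    simp only [conjTranspose_mul, conjTranspose_conjTranspose, Matrix.mul_assoc]
  have hF₀' : F₀ = weightedMinNormSolution S (Wᴴ * Ha) ((β : ℂ) • 1) := by
    rw [hF₀, weightedMinNormSolution, hG', Matrix.mul_smul, Matrix.mul_one]
    simp only [conjTranspose_mul, conjTranspose_conjTranspose, Matrix.mul_assoc]
  rw [hF₀']
  refine RCLike.re_le_re (trace_weightedMinNormSolution_le hS ?_ hF)
  rwa [hG', ← isUnit_iff_isUnit_det]

/-- The analog precoder `F₀ = β S⁻¹ Hₐᴴ W (Wᴴ Hₐ S⁻¹ Hₐᴴ W)⁻¹` is a global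
minimizer of the self-interference-plus-noise power `Tr(Fᴴ S F)` subject to the
distortionless constraint `Wᴴ Hₐ F = β I`. -/
theorem optimal_analog_precoder {M P K : ℕ}
    (S : Matrix (Fin M) (Fin M) ℂ) (hS : S.PosDef)
    (Ha : Matrix (Fin P) (Fin M) ℂ) (W : Matrix (Fin P) (Fin K) ℂ)
    (β : ℝ) (hβ : 0 < β)
    (hG : IsUnit (Wᴴ * Ha * S⁻¹ * Haᴴ * W))
    (F₀ : Matrix (Fin M) (Fin K) ℂ)
    (hF₀ : F₀ = (β : ℂ) • (S⁻¹ * Haᴴ * W * (Wᴴ * Ha * S⁻¹ * Haᴴ * W)⁻¹)) :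
    ∀ F : Matrix (Fin M) (Fin K) ℂ,
      Wᴴ * Ha * F = (β : ℂ) • (1 : Matrix (Fin K) (Fin K) ℂ) →
      (Matrix.trace (F₀ᴴ * S * F₀)).re ≤ (Matrix.trace (Fᴴ * S * F)).re :=
  optimal_analog_precoder_general S hS Ha W β hG F₀ hF₀
end

section
/- Let U ∈ ℂ^{M×L} with U* U = I_L, let A ∈ ℂ^{M×N} with N ≤ L satisfy U U* A = A (the columns of A lie in the column space of U), and let ρ ≥ 0 be real. Then there exists Q ∈ ℂ^{L×N} with Q* Q = I_N such that det(I_N + ρ · Q* U* A A* U Q) = det(I_N + ρ · A* A); i.e., the upper bound det(I_N + ρ A* A) of Theorem 2 holds with equality for some semi-unitary digital stage Q whenever the range of A is contained in the range of the semi-unitary U. -/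
/-!
With `B = Uᴴ A`, the range condition gives `Bᴴ B = Aᴴ U Uᴴ A = Aᴴ A`. The columns of `B` span
a space of dimension at most `N ≤ L`; enlarge it to an `N`-dimensional subspace and let `Q` have
an orthonormal basis of that subspace as columns. Then `Qᴴ Q = 1` and `Q Qᴴ B = B`, so Sylvester's
identity `det (1 + X Y) = det (1 + Y X)` gives
`det (1 + ρ Qᴴ B Bᴴ Q) = det (1 + ρ Bᴴ Q Qᴴ B) = det (1 + ρ Aᴴ A)`.
-/

open Matrix Module

theorem Submodule.exists_le_finrank_eq {K V : Type*} [DivisionRing K] [AddCommGroup V] [Module K V]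
    [FiniteDimensional K V] (W : Submodule K V) {n : ℕ} (h₁ : finrank K W ≤ n)
    (h₂ : n ≤ finrank K V) : ∃ W' : Submodule K V, W ≤ W' ∧ finrank K W' = n := by
  obtain ⟨d, rfl⟩ := Nat.exists_eq_add_of_le h₁
  induction d with
  | zero => exact ⟨W, le_rfl, rfl⟩
  | succ d ih =>
    obtain ⟨W', hWW', hW'⟩ := ih (by omega) (by omega)
    obtain ⟨v, -, hv⟩ := SetLike.exists_of_lt (Submodule.lt_top_of_finrank_lt_finrank
      (by rw [hW']; omega))
    refine ⟨W' ⊔ K ∙ v, hWW'.trans le_sup_left, ?_⟩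
    rw [finrank_sup_span_singleton hv, hW']
    rfl

namespace OrthonormalBasis

variable {𝕜 : Type*} [RCLike 𝕜] {m n : Type*} [Fintype m] [Fintype n]
  {W : Submodule 𝕜 (EuclideanSpace 𝕜 m)}

noncomputable def columnMatrix (e : OrthonormalBasis n 𝕜 W) : Matrix m n 𝕜 :=
  Matrix.of fun i j => (e j : EuclideanSpace 𝕜 m) i

variable (e : OrthonormalBasis n 𝕜 W)

theorem conjTranspose_columnMatrix_mul_self [DecidableEq n] :
    e.columnMatrixᴴ * e.columnMatrix = 1 := by
  ext j k
  have := orthonormal_iff_ite.mp e.orthonormal j k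
  rw [Submodule.coe_inner, EuclideanSpace.inner_eq_star_dotProduct] at this
  simpa [columnMatrix, mul_apply, one_apply, dotProduct, mul_comm] using this

theorem columnMatrix_mul_conjTranspose_mulVec {x : m → 𝕜} (hx : WithLp.toLp 2 x ∈ W) :
    (e.columnMatrix * e.columnMatrixᴴ) *ᵥ x = x := by
  have h := congrArg (fun y : W => (y : EuclideanSpace 𝕜 m).ofLp) (e.sum_repr' ⟨_, hx⟩)
  simp only [Submodule.coe_sum, Submodule.coe_smul, Submodule.coe_inner, WithLp.ofLp_sum] at h
  rw [← mulVec_mulVec]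
  conv_rhs => rw [← h]
  ext i
  simp [columnMatrix, mulVec, dotProduct, EuclideanSpace.inner_eq_star_dotProduct, mul_comm,
    Finset.sum_apply]

end OrthonormalBasis

theorem Matrix.exists_conjTranspose_mul_self_eq_one_and_mul_conjTranspose_mul_eq
    {𝕜 : Type*} [RCLike 𝕜] {m n : Type*} [Fintype m] [Fintype n] [DecidableEq n]
    (h : Fintype.card n ≤ Fintype.card m) (B : Matrix m n 𝕜) :
    ∃ Q : Matrix m n 𝕜, Qᴴ * Q = 1 ∧ Q * (Qᴴ * B) = B := by
  let W := Submodule.span 𝕜 (Set.range fun k => WithLp.toLp 2 (Bᵀ k))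
  obtain ⟨W', hWW', hW'⟩ := W.exists_le_finrank_eq (finrank_range_le_card _)
    (h.trans finrank_euclideanSpace.ge)
  let e := (stdOrthonormalBasis 𝕜 W').reindex ((finCongr hW').trans (Fintype.equivFin n).symm)
  refine ⟨e.columnMatrix, e.conjTranspose_columnMatrix_mul_self, ?_⟩
  ext i k
  rw [← Matrix.mul_assoc]
  exact congrFun (e.columnMatrix_mul_conjTranspose_mulVec
    (hWW' (Submodule.subset_span ⟨k, rfl⟩))) i

theorem det_bound_equality_in_range_general {M L N : ℕ} (hNL : N ≤ L)
    (U : Matrix (Fin M) (Fin L) ℂ)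
    (A : Matrix (Fin M) (Fin N) ℂ) (hA : U * Uᴴ * A = A)
    (ρ : ℝ) :
    ∃ Q : Matrix (Fin L) (Fin N) ℂ, Qᴴ * Q = 1 ∧
      Matrix.det (1 + (ρ : ℂ) • (Qᴴ * Uᴴ * A * Aᴴ * U * Q)) =
        Matrix.det (1 + (ρ : ℂ) • (Aᴴ * A)) := by
  set B := Uᴴ * A
  have hB : Bᴴ * B = Aᴴ * A := by
    rw [conjTranspose_mul, conjTranspose_conjTranspose, Matrix.mul_assoc, ← Matrix.mul_assoc U,
      hA]
  obtain ⟨Q, hQ, hQB⟩ := exists_conjTranspose_mul_self_eq_one_and_mul_conjTranspose_mul_eq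
    (by simpa using hNL) B
  refine ⟨Q, hQ, ?_⟩
  calc det (1 + (ρ : ℂ) • (Qᴴ * Uᴴ * A * Aᴴ * U * Q))
      = det (1 + ((ρ : ℂ) • (Qᴴ * B)) * (Bᴴ * Q)) := by
        simp only [B, conjTranspose_mul, conjTranspose_conjTranspose, smul_mul, Matrix.mul_assoc]
    _ = det (1 + (Bᴴ * Q) * ((ρ : ℂ) • (Qᴴ * B))) := det_one_add_mul_comm _ _
    _ = det (1 + (ρ : ℂ) • (Aᴴ * A)) := by
        rw [Matrix.mul_smul, Matrix.mul_assoc, hQB, hB]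

/-- **equality condition in Theorem 2.** If the columns of `A` lie in the
column space of the semi-unitary `U` (i.e. `U Uᴴ A = A`) and `N ≤ L`, then there is a
semi-unitary digital stage `Q` with `det(I + ρ Qᴴ Uᴴ A Aᴴ U Q) = det(I + ρ Aᴴ A)`. -/
theorem det_bound_equality_in_range {M L N : ℕ} (hNL : N ≤ L)
    (U : Matrix (Fin M) (Fin L) ℂ) (hU : Uᴴ * U = 1)
    (A : Matrix (Fin M) (Fin N) ℂ) (hA : U * Uᴴ * A = A)
    (ρ : ℝ) (hρ : 0 ≤ ρ) :
    ∃ Q : Matrix (Fin L) (Fin N) ℂ, Qᴴ * Q = 1 ∧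
      Matrix.det (1 + (ρ : ℂ) • (Qᴴ * Uᴴ * A * Aᴴ * U * Q)) =
        Matrix.det (1 + (ρ : ℂ) • (Aᴴ * A)) :=
  det_bound_equality_in_range_general hNL U A hA ρ
end

section
/- Let B ∈ ℂ^{L×L} be Hermitian positive semidefinite, let ρ ≥ 0 be real, and let N ≤ L. Then: (a) for every Q ∈ ℂ^{L×N} with Q* Q = I_N, det(I_N + ρ · Q* B Q) ≤ Π_{i=1}^{N} (1 + ρ · λ_i(B)), where λ_i(B) is the i-th largest eigenvalue of B; and (b) there exists Q ∈ ℂ^{L×N} with Q* Q = I_N attaining equality, namely Q whose columns are orthonormal eigenvectors of B associated with its N largest eigenvalues. Hence max over semi-unitary Q of det(I_N + ρ Q* B Q) equals Π_{i=1}^{N} (1 + ρ λ_i(B)). -/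
/-!
Diagonalize `B = W D Wᴴ` with the eigenvalues in decreasing order and put `P = Wᴴ Q`, which again
has orthonormal columns. Then `I + ρ QᴴBQ = Pᴴ (I + ρ D) P`, and by the Cauchy–Binet formula its
determinant is `∑_S |det P_S|² ∏_{k ∈ S} (1 + ρ λ_k)` over the `N`-element row sets `S`, where the
weights `|det P_S|²` sum to `det (PᴴP) = 1`. Each product is at most the one over the `N` largest
eigenvalues, and the first `N` columns of `W` attain it.
-/

open Matrix
open scoped ComplexOrder

/-- The eigenvalues of a Hermitian matrix listed in decreasing order. -/
noncomputable def eigDesc {n : ℕ} {B : Matrix (Fin n) (Fin n) ℂ}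
    (hB : B.IsHermitian) : Fin n → ℝ :=
  fun i => hB.eigenvalues (Tuple.sort hB.eigenvalues i.rev)

open Finset Equiv

theorem Fin.castLE_le_of_strictMono {N L : ℕ} (hN : N ≤ L) {f : Fin N → Fin L}
    (hf : StrictMono f) (i : Fin N) : Fin.castLE hN i ≤ f i := by
  have hcard : #(Iic i) ≤ #(Iic (f i)) :=
    card_le_card_of_injOn f (fun j hj ↦ by simpa using hf.monotone (mem_Iic.mp hj))
      hf.injective.injOn
  simpa [Fin.le_def] using hcard

theorem Tuple.sort_comp_perm_of_strictMono {ι : Type*} [LinearOrder ι] {N : ℕ}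
    {f : Fin N → ι} (hf : StrictMono f) (σ : Perm (Fin N)) : Tuple.sort (f ∘ σ) = σ⁻¹ := by
  refine (Tuple.eq_sort_iff.mpr ⟨?_, fun i j hij heq ↦ absurd heq ?_⟩).symm
  · simpa [Function.comp_assoc] using hf.monotone
  · simpa using hf.injective.ne hij.ne

theorem Finset.sum_injective_eq_sum_strictMono_sum_perm {ι M : Type*} [Fintype ι]
    [LinearOrder ι] [AddCommMonoid M] {N : ℕ} (F : (Fin N → ι) → M) :
    ∑ p : Fin N → ι with Function.Injective p, F p =
      ∑ f : Fin N → ι with StrictMono f, ∑ σ : Perm (Fin N), F (f ∘ σ) := by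
  rw [← sum_product']
  symm
  refine sum_nbij' (fun x ↦ x.1 ∘ x.2) (fun p ↦ (p ∘ Tuple.sort p, (Tuple.sort p)⁻¹))
    ?_ ?_ ?_ ?_ fun _ _ ↦ rfl
  · rintro ⟨f, σ⟩ h
    simp only [mem_product, mem_filter_univ] at h
    simpa using h.1.injective.comp σ.injective
  · intro p hp
    simp only [mem_filter_univ] at hp
    simpa using (Tuple.monotone_sort p).strictMono_of_injective
      (hp.comp (Tuple.sort p).injective)
  · rintro ⟨f, σ⟩ h
    simp only [mem_product, mem_filter_univ] at h
    ext i <;> simp [Tuple.sort_comp_perm_of_strictMono h.1]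
  · intro p _
    ext i
    simp

namespace Matrix

section CommRing

variable {m n R : Type*} [Fintype m] [Fintype n] [CommRing R]

theorem det_mul_eq_sum_det_submatrix_mul_prod [DecidableEq m] (A : Matrix m n R)
    (B : Matrix n m R) :
    det (A * B) = ∑ p : m → n, det (A.submatrix id p) * ∏ i, B (p i) i := by
  simp only [det_apply', mul_apply, prod_univ_sum, mul_sum, Fintype.piFinset_univ, sum_mul,
    submatrix_apply, id, prod_mul_distrib, mul_assoc]
  rw [sum_comm]

/-- The **Cauchy–Binet formula**. -/
theorem det_mul_eq_sum_strictMono {ι : Type*} [Fintype ι] [LinearOrder ι] {N : ℕ}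
    (A : Matrix (Fin N) ι R) (B : Matrix ι (Fin N) R) :
    det (A * B) = ∑ f : Fin N → ι with StrictMono f,
      det (A.submatrix id f) * det (B.submatrix f id) := by
  rw [det_mul_eq_sum_det_submatrix_mul_prod, ← sum_filter_of_ne (p := Function.Injective),
    sum_injective_eq_sum_strictMono_sum_perm]
  · refine sum_congr rfl fun f _ ↦ ?_
    have hperm (σ : Perm (Fin N)) :
        det (A.submatrix id (f ∘ σ)) = Perm.sign σ * det (A.submatrix id f) := by
      rw [← det_permute']
      rfl
    simp only [hperm, det_apply' (B.submatrix f id), mul_sum, submatrix_apply, id,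
      Function.comp_apply]
    exact sum_congr rfl fun σ _ ↦ by ring
  · intro p _ hp
    by_contra hinj
    obtain ⟨i, j, hij, hne⟩ := Function.not_injective_iff.mp hinj
    exact left_ne_zero_of_mul hp (det_zero_of_column_eq hne fun k ↦ by simp [hij])

end CommRing

variable {𝕜 : Type*} [RCLike 𝕜]

theorem det_conjTranspose_mul_diagonal_mul {ι : Type*} [Fintype ι] [LinearOrder ι] {N : ℕ}
    (P : Matrix ι (Fin N) 𝕜) (d : ι → 𝕜) :
    det (Pᴴ * diagonal d * P) = ∑ f : Fin N → ι with StrictMono f,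
      ((‖det (P.submatrix f id)‖ ^ 2 : ℝ) : 𝕜) * ∏ i, d (f i) := by
  rw [det_mul_eq_sum_strictMono]
  refine sum_congr rfl fun f _ ↦ ?_
  have hsub : (Pᴴ * diagonal d).submatrix id f = (P.submatrix f id)ᴴ * diagonal (d ∘ f) := by
    ext i j
    simp [mul_diagonal]
  rw [hsub, det_mul, det_conjTranspose, det_diagonal, RCLike.ofReal_pow, ← RCLike.conj_mul]
  simp only [Function.comp_apply, RCLike.star_def]
  ring

theorem re_det_conjTranspose_mul_diagonal_mul_le {L N : ℕ} (hN : N ≤ L) {e : Fin L → ℝ}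
    (he : Antitone e) (he₀ : ∀ i, 0 ≤ e i) {P : Matrix (Fin L) (Fin N) 𝕜} (hP : Pᴴ * P = 1) :
    RCLike.re (det (Pᴴ * diagonal (fun i ↦ (e i : 𝕜)) * P)) ≤ ∏ i, e (Fin.castLE hN i) := by
  have hweights : ∑ f : Fin N → Fin L with StrictMono f, ‖det (P.submatrix f id)‖ ^ 2 = 1 := by
    have h := det_conjTranspose_mul_diagonal_mul P fun _ ↦ 1
    rw [diagonal_one, Matrix.mul_one, hP, det_one] at h
    simp only [prod_const_one, mul_one, ← RCLike.ofReal_sum] at h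
    exact_mod_cast h.symm
  simp only [det_conjTranspose_mul_diagonal_mul, ← RCLike.ofReal_prod, ← RCLike.ofReal_mul,
    ← RCLike.ofReal_sum, RCLike.ofReal_re]
  calc ∑ f : Fin N → Fin L with StrictMono f, ‖det (P.submatrix f id)‖ ^ 2 * ∏ i, e (f i)
      ≤ ∑ f : Fin N → Fin L with StrictMono f,
          ‖det (P.submatrix f id)‖ ^ 2 * ∏ i, e (Fin.castLE hN i) := by
        refine sum_le_sum fun f hf ↦ mul_le_mul_of_nonneg_left ?_ (by positivity)
        exact prod_le_prod (fun i _ ↦ he₀ _) fun i _ ↦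
          he (Fin.castLE_le_of_strictMono hN (by simpa using hf) i)
    _ = ∏ i, e (Fin.castLE hN i) := by rw [← sum_mul, hweights, one_mul]

theorem conjTranspose_submatrix_mul_mul_submatrix {m n : Type*} [Fintype m]
    (W M : Matrix m m 𝕜) (c : n → m) :
    (W.submatrix id c)ᴴ * M * W.submatrix id c = (Wᴴ * M * W).submatrix c c :=
  rfl

theorem conjTranspose_mul_one_add_smul_mul {m n : Type*} [Fintype m] [DecidableEq m]
    [Fintype n] [DecidableEq n] {Q : Matrix m n 𝕜} (hQ : Qᴴ * Q = 1) (r : 𝕜)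
    (B : Matrix m m 𝕜) : Qᴴ * (1 + r • B) * Q = 1 + r • (Qᴴ * B * Q) := by
  rw [Matrix.mul_add, Matrix.add_mul, Matrix.mul_one, hQ, Matrix.mul_smul, Matrix.smul_mul]

theorem conjTranspose_mul_mul_eq_of_mem_unitaryGroup {m n : Type*} [Fintype m] [DecidableEq m]
    {W : Matrix m m 𝕜} (hW : W ∈ unitaryGroup m 𝕜) (Q : Matrix m n 𝕜) (M : Matrix m m 𝕜) :
    Qᴴ * M * Q = (Wᴴ * Q)ᴴ * (Wᴴ * M * W) * (Wᴴ * Q) := by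
  have hWW (X : Matrix m n 𝕜) : W * (Wᴴ * X) = X := by
    rw [← Matrix.mul_assoc, ← star_eq_conjTranspose, mem_unitaryGroup_iff.mp hW, Matrix.one_mul]
  simp only [conjTranspose_mul, conjTranspose_conjTranspose, Matrix.mul_assoc, hWW]

end Matrix

theorem Matrix.PosSemidef.eigDesc_nonneg {n : ℕ} {B : Matrix (Fin n) (Fin n) ℂ}
    (hB : B.PosSemidef) (i : Fin n) : 0 ≤ eigDesc hB.isHermitian i :=
  hB.eigenvalues_nonneg _

theorem eigDesc_antitone {n : ℕ} {B : Matrix (Fin n) (Fin n) ℂ} (hB : B.IsHermitian) :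
    Antitone (eigDesc hB) :=
  fun _ _ hij ↦ Tuple.monotone_sort hB.eigenvalues (Fin.rev_le_rev.mpr hij)

theorem Matrix.IsHermitian.exists_unitary_conj_eq_diagonal_eigDesc {n : ℕ}
    {B : Matrix (Fin n) (Fin n) ℂ} (hB : B.IsHermitian) :
    ∃ W ∈ unitaryGroup (Fin n) ℂ, Wᴴ * B * W = diagonal (fun i ↦ (eigDesc hB i : ℂ)) := by
  let U : Matrix (Fin n) (Fin n) ℂ := hB.eigenvectorUnitary
  let σ : Perm (Fin n) := Fin.revPerm.trans (Tuple.sort hB.eigenvalues)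
  have hU : Uᴴ * B * U = diagonal (fun i ↦ (hB.eigenvalues i : ℂ)) := by
    rw [← star_eq_conjTranspose, ← Unitary.conjStarAlgAut_star_apply (S := ℂ)]
    exact hB.conjStarAlgAut_star_eigenvectorUnitary
  refine ⟨U.submatrix id σ, ?_, ?_⟩
  · rw [mem_unitaryGroup_iff', star_eq_conjTranspose, ← Matrix.mul_one (_ᴴ),
      conjTranspose_submatrix_mul_mul_submatrix, Matrix.mul_one, ← star_eq_conjTranspose]
    simp [U]
  · rw [conjTranspose_submatrix_mul_mul_submatrix, hU, submatrix_diagonal_equiv]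
    rfl

/-- **core log-det maximization, eq. (26).** For Hermitian positive
semidefinite `B`, `ρ ≥ 0` and `N ≤ L`: (a) every semi-unitary `Q` satisfies
`det(I + ρ Qᴴ B Q) ≤ ∏_{i<N} (1 + ρ λ_i(B))`, and (b) some semi-unitary `Q` (dominant
eigenvectors of `B`) attains equality; hence the maximum equals the product. -/
theorem logdet_maximization {L N : ℕ} (hN : N ≤ L)
    (B : Matrix (Fin L) (Fin L) ℂ) (hB : B.PosSemidef)
    (ρ : ℝ) (hρ : 0 ≤ ρ) :
    (∀ Q : Matrix (Fin L) (Fin N) ℂ, Qᴴ * Q = 1 →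
      (Matrix.det (1 + (ρ : ℂ) • (Qᴴ * B * Q))).re ≤
        ∏ i : Fin N, (1 + ρ * eigDesc hB.isHermitian (Fin.castLE hN i))) ∧
    (∃ Q : Matrix (Fin L) (Fin N) ℂ, Qᴴ * Q = 1 ∧
      (Matrix.det (1 + (ρ : ℂ) • (Qᴴ * B * Q))).re =
        ∏ i : Fin N, (1 + ρ * eigDesc hB.isHermitian (Fin.castLE hN i))) := by
  obtain ⟨W, hW, hWBW⟩ := hB.isHermitian.exists_unitary_conj_eq_diagonal_eigDesc
  set e : Fin L → ℝ := fun i ↦ 1 + ρ * eigDesc hB.isHermitian i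
  have he : Antitone e := fun _ _ hij ↦
    add_le_add_right (mul_le_mul_of_nonneg_left (eigDesc_antitone _ hij) hρ) 1
  have he₀ (i : Fin L) : 0 ≤ e i := add_nonneg zero_le_one (mul_nonneg hρ (hB.eigDesc_nonneg i))
  have hdiag : Wᴴ * (1 + (ρ : ℂ) • B) * W = diagonal (fun i ↦ (e i : ℂ)) := by
    rw [conjTranspose_mul_one_add_smul_mul (mem_unitaryGroup_iff'.mp hW), hWBW]
    ext i j
    by_cases hij : i = j <;> simp [e, hij]
  constructor
  · intro Q hQ
    have hWQ : (Wᴴ * Q)ᴴ * (Wᴴ * Q) = 1 := by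
      simpa [← star_eq_conjTranspose, mem_unitaryGroup_iff'.mp hW, hQ] using
        (conjTranspose_mul_mul_eq_of_mem_unitaryGroup hW Q 1).symm
    rw [← conjTranspose_mul_one_add_smul_mul hQ,
      conjTranspose_mul_mul_eq_of_mem_unitaryGroup hW, hdiag]
    exact re_det_conjTranspose_mul_diagonal_mul_le hN he he₀ hWQ
  · have hinj := Fin.castLE_injective hN
    have hQ : (W.submatrix id (Fin.castLE hN))ᴴ * W.submatrix id (Fin.castLE hN) = 1 := by
      rw [← Matrix.mul_one (_ᴴ), conjTranspose_submatrix_mul_mul_submatrix, Matrix.mul_one,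
        ← star_eq_conjTranspose, mem_unitaryGroup_iff'.mp hW, submatrix_one _ hinj]
    refine ⟨_, hQ, ?_⟩
    rw [← conjTranspose_mul_one_add_smul_mul hQ, conjTranspose_submatrix_mul_mul_submatrix, hdiag,
      submatrix_diagonal _ _ hinj, det_diagonal]
    simp only [Function.comp_apply, ← Complex.ofReal_prod, Complex.ofReal_re, e]
end
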